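/- Let M, L, N be integers with 1 ≤ L ≤ M, m = M−L+1, and μ ∈ ℝ. Let a ∈ ℂ^m have entries a_k = exp(i(k−(M−1)/2)μ) for k = 0,…,m−1, let s ∈ ℂ^N, let a_L ∈ ℂ^L have entries (a_L)_ℓ = exp(i(ℓ−1)μ), ℓ = 1,…,L, and set s_L = a_L ⊗ s ∈ ℂ^{NL}. Then the forward–backward-averaged single-source data matrix satisfies [a·s_Lᵀ, Π_m·conj(a·s_Lᵀ)·Π_{NL}] = a · [s_Lᵀ, (a_L ⊗ Π_N·conj(s))ᵀ] ∈ ℂ^{m×2NL}; in particular, forward–backward averaging preserves the rank-one structure of the single-source spatially smoothed data matrix. -/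
import Mathlib


open Matrix Complex
open scoped Kronecker

/-- The `K × K` exchange matrix with ones on the antidiagonal and zeros elsewhere. -/
def exch (K : ℕ) : Matrix (Fin K) (Fin K) ℂ :=
  Matrix.of fun i j => if (i : ℕ) + (j : ℕ) + 1 = K then 1 else 0

/-- The truncated centered steering vector `a ∈ ℂ^{M-L+1}` (the first-subarray steering
vector of an `M`-element centered ULA): `a_k = exp(i (k - (M-1)/2) μ)`. -/
noncomputable def atrunc (M L : ℕ) (μ : ℝ) : Fin (M - L + 1) → ℂ :=
  fun k => Complex.exp (Complex.I * (((k : ℝ) - ((M : ℝ) - 1) / 2) : ℝ) * (μ : ℂ))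

/-- The smoothed symbol vector `s_L = a_L ⊗ s`, indexed by `Fin L × Fin N`,
where `(a_L)_ℓ = exp(i(ℓ-1)μ)`. -/
noncomputable def sL (L N : ℕ) (μ : ℝ) (s : Fin N → ℂ) : Fin L × Fin N → ℂ :=
  fun c => Complex.exp (Complex.I * ((c.1 : ℕ) : ℂ) * (μ : ℂ)) * s c.2

lemma exch_apply_rev {K : ℕ} (i j : Fin K) :
    exch K i j = if j = i.rev then 1 else 0 := by
  have h : ((i : ℕ) + (j : ℕ) + 1 = K) ↔ j = i.rev := by
    rw [Fin.ext_iff, Fin.val_rev]; omega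
  simp [exch, h]
lemma exch_apply_rev' {K : ℕ} (i j : Fin K) :
    exch K i j = if i = j.rev then 1 else 0 := by
  have h : ((i : ℕ) + (j : ℕ) + 1 = K) ↔ i = j.rev := by
    rw [Fin.ext_iff, Fin.val_rev]; omega
  simp [exch, h]
lemma exch_mul_apply {K : ℕ} {α : Type*} [Fintype α] (A : Matrix (Fin K) α ℂ)
    (i : Fin K) (j : α) : (exch K * A) i j = A i.rev j := by
  simp [Matrix.mul_apply, exch_apply_rev, ite_mul]
lemma mul_kron_exch_apply {L N : ℕ} {α : Type*} (A : Matrix α (Fin L × Fin N) ℂ)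
    (i : α) (l : Fin L) (n : Fin N) :
    (A * (exch L ⊗ₖ exch N)) i (l, n) = A i (l.rev, n.rev) := by
  simp [Matrix.mul_apply, exch_apply_rev', Fintype.sum_prod_type, mul_ite]
lemma exch_mulVec {K : ℕ} (v : Fin K → ℂ) (j : Fin K) :
    (exch K *ᵥ v) j = v j.rev := by
  simp [Matrix.mulVec, dotProduct, exch_apply_rev, ite_mul]

/-- Forward–backward averaging preserves the rank-one structure of the single-source
spatially smoothed data matrix:
`[a s_Lᵀ, Π_m conj(a s_Lᵀ) Π_{NL}] = a [s_Lᵀ, (a_L ⊗ Π_N conj(s))ᵀ]`.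
(The columns are indexed by `Fin 2 × (Fin L × Fin N)`; on the mixed-radix column index
the exchange matrix `Π_{NL}` is the Kronecker product `Π_L ⊗ Π_N`.) -/
theorem fba_single_source_rank_one (M L N : ℕ) (hL : 1 ≤ L) (hLM : L ≤ M) (μ : ℝ)
    (s : Fin N → ℂ) :
    (Matrix.of fun (i : Fin (M - L + 1)) (c : Fin 2 × (Fin L × Fin N)) =>
        if c.1 = 0 then Matrix.vecMulVec (atrunc M L μ) (sL L N μ s) i c.2
        else (exch (M - L + 1) *
          (Matrix.vecMulVec (atrunc M L μ) (sL L N μ s)).map (starRingEnd ℂ) *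
          (exch L ⊗ₖ exch N)) i c.2)
      = Matrix.vecMulVec (atrunc M L μ)
          (fun c : Fin 2 × (Fin L × Fin N) =>
            if c.1 = 0 then sL L N μ s c.2
            else Complex.exp (Complex.I * ((c.2.1 : ℕ) : ℂ) * (μ : ℂ)) *
              (exch N *ᵥ (fun j => (starRingEnd ℂ) (s j))) c.2.2) := by
  ext i ⟨c1, l, n⟩
  fin_cases c1
  · simp [Matrix.vecMulVec_apply]
  · simp only [Matrix.of_apply, Matrix.vecMulVec_apply, if_neg (by decide : (1 : Fin 2) ≠ 0)]
    rw [mul_kron_exch_apply, exch_mul_apply, Matrix.map_apply, Matrix.vecMulVec_apply,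
      exch_mulVec]
    simp only [atrunc, sL, _root_.map_mul, ← Complex.exp_conj, map_ofNat, Complex.conj_I,
      Complex.conj_ofReal, map_natCast]
    rw [if_neg (by decide), if_neg (by decide)]
    have hi : ((i.rev : ℕ) : ℂ) = (M : ℂ) - (L : ℂ) - ((i : ℕ) : ℂ) := by
      have h1 : (i : ℕ) < M - L + 1 := i.is_lt
      rw [Fin.val_rev]
      have h2 : M - L + 1 - ((i : ℕ) + 1) = M - L - (i : ℕ) := by omega
      rw [h2, Nat.cast_sub (by omega), Nat.cast_sub hLM]
    have hl : ((l.rev : ℕ) : ℂ) = (L : ℂ) - 1 - ((l : ℕ) : ℂ) := by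
      have h1 : (l : ℕ) < L := l.is_lt
      rw [Fin.val_rev]
      have h2 : L - ((l : ℕ) + 1) = L - 1 - (l : ℕ) := by omega
      rw [h2, Nat.cast_sub (by omega), Nat.cast_sub hL]
      push_cast; ring
    rw [← mul_assoc, ← mul_assoc, ← Complex.exp_add, ← Complex.exp_add]
    congr 2
    push_cast
    rw [hi, hl]
    ring
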